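/- The fundamental group of a closed non-orientable surface is not a Kähler group. -/

import Mathlib

/-- The module of real 1-cocycles (= homomorphisms `G → ℝ`), so that
`H¹(G;ℝ) = Z1 G` for trivial coefficients. -/
def Z1 (G : Type*) [Group G] : Submodule ℝ (G → ℝ) where
  carrier := {f | ∀ g h : G, f (g * h) = f g + f h}
  add_mem' := by intro a b ha hb g h; simp only [Pi.add_apply, ha g h, hb g h]; ring
  zero_mem' := by intro g h; simp
  smul_mem' := by intro c a ha g h; simp only [Pi.smul_apply, ha g h, smul_eq_mul]; ring

/-- First Betti number `b₁(G) = dim_ℝ H¹(G;ℝ) = dim_ℝ Hom(G,ℝ)`. -/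
noncomputable def b1 (G : Type*) [Group G] : ℕ := Module.finrank ℝ (Z1 G)

/-- Real 2-cocycles on `G` (trivial coefficients, inhomogeneous bar cochains). -/
def Z2 (G : Type*) [Group G] : Submodule ℝ (G × G → ℝ) where
  carrier := {f | ∀ g h k : G, f (g, h) + f (g * h, k) = f (g, h * k) + f (h, k)}
  add_mem' := by intro a b ha hb g h k; simp only [Pi.add_apply]
                 have := ha g h k; have := hb g h k; linarith
  zero_mem' := by intro g h k; simp
  smul_mem' := by intro c a ha g h k; simp only [Pi.smul_apply, smul_eq_mul]
                  linear_combination c * (ha g h k)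

/-- Coboundary map from 1-cochains to 2-cochains. -/
noncomputable def cobound (G : Type*) [Group G] : (G → ℝ) →ₗ[ℝ] (G × G → ℝ) where
  toFun u := fun p => u p.1 + u p.2 - u (p.1 * p.2)
  map_add' u v := by funext p; simp [Pi.add_apply]; ring
  map_smul' c u := by funext p; simp [Pi.smul_apply, smul_eq_mul]; ring

/-- 2-coboundaries, viewed inside the 2-cocycles. -/
noncomputable def B2 (G : Type*) [Group G] : Submodule ℝ (Z2 G) :=
  (LinearMap.range (cobound G)).comap (Z2 G).subtype

/-- Second group cohomology `H²(G;ℝ)` with trivial real coefficients. -/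
noncomputable abbrev H2 (G : Type*) [Group G] := Z2 G ⧸ B2 G

/-- The cup product of two 1-cocycles, as a 2-cocycle. -/
noncomputable def cupAux {G : Type*} [Group G] (φ ψ : Z1 G) : Z2 G :=
  ⟨fun p => φ.1 p.1 * ψ.1 p.2, by
    intro g h k
    have hφ := φ.2
    have hψ := ψ.2
    change ∀ g h : G, φ.1 (g * h) = φ.1 g + φ.1 h at hφ
    change ∀ g h : G, ψ.1 (g * h) = ψ.1 g + ψ.1 h at hψ
    simp only []
    rw [hφ g h, hψ h k]
    ring⟩

/-- The cup product `H¹(G;ℝ) × H¹(G;ℝ) → H²(G;ℝ)` on group cohomology. -/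
noncomputable def cup {G : Type*} [Group G] (φ ψ : Z1 G) : H2 G :=
  Submodule.Quotient.mk (cupAux φ ψ)

open scoped commutatorElement

/-- The relator `[a₁,b₁]⋯[a_g,b_g]` of a closed orientable genus-`g` surface group. -/
def surfaceRel (g : ℕ) : FreeGroup (Fin (2 * g)) :=
  (List.ofFn (fun i : Fin g =>
    ⁅FreeGroup.of (⟨2 * i.1, by omega⟩ : Fin (2 * g)),
     FreeGroup.of (⟨2 * i.1 + 1, by omega⟩ : Fin (2 * g))⁆)).prod

/-- The fundamental group `⟨a₁,b₁,…,a_g,b_g ∣ [a₁,b₁]⋯[a_g,b_g]⟩` of the closed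
orientable surface of genus `g`. -/
abbrev SurfaceGroup (g : ℕ) : Type := PresentedGroup ({surfaceRel g} : Set (FreeGroup (Fin (2 * g))))

/-- The relator `a₁²a₂²⋯a_g²` of a closed non-orientable genus-`g` surface group. -/
def nonorientableRel (g : ℕ) : FreeGroup (Fin g) :=
  (List.ofFn (fun i : Fin g => (FreeGroup.of i) ^ 2)).prod

/-- The fundamental group `⟨a₁,…,a_g ∣ a₁²⋯a_g²⟩` of the closed non-orientable
surface of genus `g`. -/
abbrev NonorientableSurfaceGroup (g : ℕ) : Type :=
  PresentedGroup ({nonorientableRel g} : Set (FreeGroup (Fin g)))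

/-- Relators of the orbifold fundamental group of a closed orientable genus-`g`
2-orbifold with `k` cone points of orders `m 0, …, m (k-1)`. -/
def orbifoldRels (g k : ℕ) (m : Fin k → ℕ) : Set (FreeGroup (Fin (2 * g) ⊕ Fin k)) :=
  {r | ∃ j : Fin k, r = (FreeGroup.of (Sum.inr j)) ^ (m j)} ∪
  { (List.ofFn (fun i : Fin g =>
      ⁅(FreeGroup.of (Sum.inl (⟨2 * i.1, by omega⟩ : Fin (2 * g))) : FreeGroup (Fin (2 * g) ⊕ Fin k)),
       FreeGroup.of (Sum.inl (⟨2 * i.1 + 1, by omega⟩ : Fin (2 * g)))⁆)).prod *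
    (List.ofFn (fun j : Fin k => FreeGroup.of (Sum.inr j))).prod }

/-- The orbifold fundamental group of a closed orientable genus-`g` 2-orbifold
with cone points of orders `m j`. -/
abbrev OrbifoldGroup (g k : ℕ) (m : Fin k → ℕ) : Type :=
  PresentedGroup (orbifoldRels g k m)

/-- Pullback of 1-cocycles along a group homomorphism. -/
def z1Map {G Q : Type*} [Group G] [Group Q] (f : G →* Q) : Z1 Q →ₗ[ℝ] Z1 G where
  toFun φ := ⟨fun x => φ.1 (f x), by intro x y; simp only [map_mul]; exact φ.2 (f x) (f y)⟩
  map_add' φ ψ := rfl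
  map_smul' c φ := rfl

/-!
A real 1-cocycle on `⟨a₁,…,a_g ∣ a₁²⋯a_g²⟩` is the same as a vector of values on the
generators with zero sum, so `b₁ = g - 1 > 0`. On the other hand every cup product vanishes:
a pair of cocycles `(φ, ψ)` lifts to a homomorphism `F` into the real Heisenberg group, because
the central coordinates of the images of the generators can be chosen so that the relator maps
to `1`, and then the central coordinate of `F` is a primitive of `φ ∪ ψ`.
-/

@[ext] structure Heisenberg where
  a : ℝ
  b : ℝ
  c : ℝ

namespace Heisenberg

instance : Mul Heisenberg := ⟨fun x y => ⟨x.a + y.a, x.b + y.b, x.c + y.c + x.a * y.b⟩⟩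
instance : One Heisenberg := ⟨⟨0, 0, 0⟩⟩
instance : Inv Heisenberg := ⟨fun x => ⟨-x.a, -x.b, -x.c + x.a * x.b⟩⟩

@[simp] lemma mul_a (x y : Heisenberg) : (x * y).a = x.a + y.a := rfl
@[simp] lemma mul_b (x y : Heisenberg) : (x * y).b = x.b + y.b := rfl
@[simp] lemma mul_c (x y : Heisenberg) : (x * y).c = x.c + y.c + x.a * y.b := rfl
@[simp] lemma one_a : (1 : Heisenberg).a = 0 := rfl
@[simp] lemma one_b : (1 : Heisenberg).b = 0 := rfl
@[simp] lemma one_c : (1 : Heisenberg).c = 0 := rfl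
@[simp] lemma inv_a (x : Heisenberg) : x⁻¹.a = -x.a := rfl
@[simp] lemma inv_b (x : Heisenberg) : x⁻¹.b = -x.b := rfl
@[simp] lemma inv_c (x : Heisenberg) : x⁻¹.c = -x.c + x.a * x.b := rfl

instance : Group Heisenberg where
  mul_assoc x y z := by ext <;> simp <;> ring
  one_mul x := by ext <;> simp
  mul_one x := by ext <;> simp
  inv_mul_cancel x := by ext <;> simp

def fst : Heisenberg →* Multiplicative ℝ where
  toFun x := .ofAdd x.a
  map_one' := rfl
  map_mul' _ _ := rfl

def snd : Heisenberg →* Multiplicative ℝ where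
  toFun x := .ofAdd x.b
  map_one' := rfl
  map_mul' _ _ := rfl

theorem list_ofFn_prod : ∀ {n : ℕ} (x : Fin n → Heisenberg),
    (List.ofFn x).prod =
      ⟨∑ i, (x i).a, ∑ i, (x i).b, ∑ i, (x i).c + ∑ i, (x i).a * ∑ j ∈ Finset.Ioi i, (x j).b⟩
  | 0, x => by ext <;> simp
  | n + 1, x => by
      rw [List.ofFn_succ, List.prod_cons, list_ofFn_prod (fun i => x i.succ)]
      ext <;> simp [Fin.sum_univ_succ, Fin.sum_Ioi_succ]; ring

end Heisenberg

namespace Z1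

variable {G : Type*} [Group G]

theorem map_one (φ : Z1 G) : φ.1 1 = 0 := by
  have h := φ.2 1 1
  rw [one_mul] at h
  linarith

def toHom (φ : Z1 G) : G →* Multiplicative ℝ where
  toFun x := .ofAdd (φ.1 x)
  map_one' := by rw [map_one]; rfl
  map_mul' x y := by rw [φ.2 x y]; rfl

def ofHom (f : G →* Multiplicative ℝ) : Z1 G :=
  ⟨fun x => (f x).toAdd, fun x y => by simp only [map_mul, toAdd_mul]⟩

theorem ofHom_apply (f : G →* Multiplicative ℝ) (x : G) : (ofHom f).1 x = (f x).toAdd := rfl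

theorem toHom_injective : Function.Injective (toHom : Z1 G → G →* Multiplicative ℝ) :=
  fun _ _ h => Subtype.ext <| funext fun x => congrArg Multiplicative.toAdd (DFunLike.congr_fun h x)

theorem ext_presentedGroup {α : Type*} {rels : Set (FreeGroup α)}
    {φ ψ : Z1 (PresentedGroup rels)}
    (h : ∀ i, φ.1 (PresentedGroup.of i) = ψ.1 (PresentedGroup.of i)) : φ = ψ :=
  toHom_injective <| PresentedGroup.ext fun i => congrArg Multiplicative.ofAdd (h i)

end Z1

theorem cup_eq_zero_of_heisenberg_lift {G : Type*} [Group G] {φ ψ : Z1 G} (F : G →* Heisenberg)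
    (hφ : ∀ x, (F x).a = φ.1 x) (hψ : ∀ x, (F x).b = ψ.1 x) : cup φ ψ = 0 := by
  rw [cup, Submodule.Quotient.mk_eq_zero, B2, Submodule.mem_comap]
  refine ⟨fun x => -(F x).c, funext fun p => ?_⟩
  change -(F p.1).c + -(F p.2).c - -(F (p.1 * p.2)).c = φ.1 p.1 * ψ.1 p.2
  rw [map_mul, Heisenberg.mul_c, hφ, hψ]
  ring

theorem finrank_ker_sum_proj (K ι : Type*) [Field K] [Fintype ι] :
    Module.finrank K (LinearMap.ker (∑ i : ι, LinearMap.proj i : (ι → K) →ₗ[K] K)) =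
      Fintype.card ι - 1 := by
  rcases isEmpty_or_nonempty ι with hι | ⟨⟨i⟩⟩
  · simp [Module.finrank_zero_of_subsingleton]
  classical
  have hne : (∑ i : ι, LinearMap.proj i : (ι → K) →ₗ[K] K) ≠ 0 := fun h => by
    simpa using LinearMap.congr_fun h (Pi.single i 1)
  have := Module.Dual.finrank_ker_add_one_of_ne_zero hne
  rw [Module.finrank_fintype_fun_eq_card] at this
  omega

namespace NonorientableSurfaceGroup

variable {g : ℕ}

def lift {H : Type*} [Group H] (f : Fin g → H) (hf : (List.ofFn fun i => f i ^ 2).prod = 1) :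
    NonorientableSurfaceGroup g →* H :=
  PresentedGroup.toGroup <| by
    rintro r rfl
    simpa [nonorientableRel, map_list_prod, List.map_ofFn, Function.comp_def] using hf

theorem lift_of {H : Type*} [Group H] (f : Fin g → H)
    (hf : (List.ofFn fun i => f i ^ 2).prod = 1) (i : Fin g) :
    lift f hf (PresentedGroup.of i) = f i :=
  PresentedGroup.toGroup.of _

theorem list_ofFn_map_sq_prod {H : Type*} [Group H] (θ : NonorientableSurfaceGroup g →* H) :
    (List.ofFn fun i => θ (PresentedGroup.of i) ^ 2).prod = 1 :=
  calc (List.ofFn fun i => θ (PresentedGroup.of i) ^ 2).prod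
      = θ (PresentedGroup.mk _ (nonorientableRel g)) := by
        simp only [nonorientableRel.eq_1 g, map_list_prod, List.map_ofFn, Function.comp_def,
          map_pow]
        rfl
    _ = 1 := by rw [PresentedGroup.one_of_mem (Set.mem_singleton _), map_one]

def evalOf (g : ℕ) : Z1 (NonorientableSurfaceGroup g) →ₗ[ℝ] (Fin g → ℝ) where
  toFun φ i := φ.1 (PresentedGroup.of i)
  map_add' _ _ := rfl
  map_smul' _ _ := rfl

theorem sum_evalOf_eq_zero (φ : Z1 (NonorientableSurfaceGroup g)) : ∑ i, evalOf g φ i = 0 := by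
  have h := congrArg Multiplicative.toAdd (list_ofFn_map_sq_prod (Z1.toHom φ))
  simp only [List.prod_ofFn, toAdd_prod, toAdd_pow, toAdd_one, Z1.toHom, MonoidHom.coe_mk,
    OneHom.coe_mk, toAdd_ofAdd, nsmul_eq_mul, Nat.cast_ofNat, ← Finset.mul_sum] at h
  simpa [evalOf] using h

theorem evalOf_injective : Function.Injective (evalOf g) :=
  fun _ _ h => Z1.ext_presentedGroup (congrFun h)

theorem range_evalOf : LinearMap.range (evalOf g) = LinearMap.ker (∑ i, LinearMap.proj i) := by
  ext c
  simp only [LinearMap.mem_range, LinearMap.mem_ker, LinearMap.coe_sum, LinearMap.coe_proj,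
    Finset.sum_apply, Function.eval]
  constructor
  · rintro ⟨φ, rfl⟩
    exact sum_evalOf_eq_zero φ
  · intro hc
    have hrel : (List.ofFn fun i => Multiplicative.ofAdd (c i) ^ 2).prod = 1 := by
      rw [List.prod_ofFn, Finset.prod_pow, ← ofAdd_sum, hc, ofAdd_zero, one_pow]
    exact ⟨Z1.ofHom (lift _ hrel), funext fun i => by simp [evalOf, Z1.ofHom_apply, lift_of]⟩

theorem b1_eq_sub_one (g : ℕ) : b1 (NonorientableSurfaceGroup g) = g - 1 := by
  rw [b1, ← LinearMap.finrank_range_of_inj evalOf_injective, range_evalOf,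
    finrank_ker_sum_proj, Fintype.card_fin]

theorem exists_heisenberg_lift (φ ψ : Z1 (NonorientableSurfaceGroup g)) :
    ∃ F : NonorientableSurfaceGroup g →* Heisenberg,
      (∀ x, (F x).a = φ.1 x) ∧ ∀ x, (F x).b = ψ.1 x := by
  set a := evalOf g φ
  set b := evalOf g ψ
  -- `(a, b, c)² = (2a, 2b, 2c + ab)`; this `c` cancels the `i`-th term of the central
  -- coordinate of the relator in `Heisenberg.list_ofFn_prod`.
  let f : Fin g → Heisenberg := fun i =>
    ⟨a i, b i, -(a i * b i) / 2 - 2 * a i * ∑ j ∈ Finset.Ioi i, b j⟩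
  have hf : (List.ofFn fun i => f i ^ 2).prod = 1 := by
    rw [Heisenberg.list_ofFn_prod]
    ext
    · simp [f, pow_two, ← two_mul, ← Finset.mul_sum, a, sum_evalOf_eq_zero]
    · simp [f, pow_two, ← two_mul, ← Finset.mul_sum, b, sum_evalOf_eq_zero]
    · simp only [f, pow_two, Heisenberg.mul_a, Heisenberg.mul_b, Heisenberg.mul_c,
        Heisenberg.one_c, ← two_mul, ← Finset.mul_sum, ← Finset.sum_add_distrib]
      exact Finset.sum_eq_zero fun i _ => by ring
  refine ⟨lift f hf, fun x => ?_, fun x => ?_⟩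
  · refine congrArg (·.1 x) (Z1.ext_presentedGroup (ψ := φ)
      (φ := Z1.ofHom (Heisenberg.fst.comp (lift f hf))) fun i => ?_)
    simp [Z1.ofHom_apply, lift_of, Heisenberg.fst, f, a, evalOf]
  · refine congrArg (·.1 x) (Z1.ext_presentedGroup (ψ := ψ)
      (φ := Z1.ofHom (Heisenberg.snd.comp (lift f hf))) fun i => ?_)
    simp [Z1.ofHom_apply, lift_of, Heisenberg.snd, f, b, evalOf]

theorem cup_eq_zero (φ ψ : Z1 (NonorientableSurfaceGroup g)) : cup φ ψ = 0 :=
  let ⟨F, hφ, hψ⟩ := exists_heisenberg_lift φ ψ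
  cup_eq_zero_of_heisenberg_lift F hφ hψ

end NonorientableSurfaceGroup

theorem nonorientable_surface_group_not_kahler_general
    (IsKahler : (G : Type) → [inst : Group G] → Prop)
    (hCup : ∀ (G : Type) [Group G], IsKahler G → 0 < b1 G →
      ∃ φ ψ : Z1 G, cup φ ψ ≠ 0)
    (g : ℕ) (hg : 2 ≤ g) :
    ¬ IsKahler (NonorientableSurfaceGroup g) := by
  intro hK
  have hb1 : 0 < b1 (NonorientableSurfaceGroup g) := by
    rw [NonorientableSurfaceGroup.b1_eq_sub_one]
    omega
  obtain ⟨φ, ψ, hφψ⟩ := hCup _ hK hb1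
  exact hφψ (NonorientableSurfaceGroup.cup_eq_zero φ ψ)

/-- The fundamental group of a closed non-orientable surface (of genus
`g ≥ 2`, the genus-1 case ℝP² having finite fundamental group) is not a Kähler group.
The Kähler input: Kähler groups have even `b₁` and, when `b₁ > 0`, non-trivial cup
product `H¹ × H¹ → H²` (Hard Lefschetz). -/
theorem nonorientable_surface_group_not_kahler
    (IsKahler : (G : Type) → [inst : Group G] → Prop)
    (hEven : ∀ (G : Type) [Group G], IsKahler G → Even (b1 G))
    (hCup : ∀ (G : Type) [Group G], IsKahler G → 0 < b1 G →
      ∃ φ ψ : Z1 G, cup φ ψ ≠ 0)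
    (g : ℕ) (hg : 2 ≤ g) :
    ¬ IsKahler (NonorientableSurfaceGroup g) :=
  nonorientable_surface_group_not_kahler_general IsKahler hCup g hg
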